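/- Let n ≥ 4, let T be a triangulation of the n-gon, and let T⁺ = T ∪ {{n−1, 0}} be its subdivision at the boundary edge e = {n−1, 0}. Then T⁺ is a triangulation of the (n+1)-gon, and 2·TCL(T⁺) = 2·TCL(T) + 4 + m_T(e) if T contains no diameter, while 2·TCL(T⁺) = 2·TCL(T) + 3 + m_T(e) if T contains a diameter. -/
import Mathlib


open scoped Classical

/-- The cyclic distance between two vertices of the `n`-gon labeled by `ZMod n`:
`min (k, n - k)` where `k` is the representative of `b - a`. -/
def cycDist {n : ℕ} (a b : ZMod n) : ℕ := min (b - a).val (a - b).val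

/-- The length of an unordered pair of vertices (in particular, of a chord). -/
def chordLen {n : ℕ} (p : Sym2 (ZMod n)) : ℕ :=
  Sym2.lift ⟨fun a b => cycDist a b, fun _ _ => min_comm _ _⟩ p

/-- `x` lies strictly inside the clockwise arc from `a` to `b`. -/
def InArc {n : ℕ} (a b x : ZMod n) : Prop :=
  0 < (x - a).val ∧ (x - a).val < (b - a).val

/-- Two chords cross: their four endpoints are distinct and exactly one endpoint of the
second chord lies strictly inside the clockwise arc from `a` to `b`. -/
def Crosses {n : ℕ} (p q : Sym2 (ZMod n)) : Prop :=
  ∃ a b c d : ZMod n, p = s(a, b) ∧ q = s(c, d) ∧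
    a ≠ b ∧ a ≠ c ∧ a ≠ d ∧ b ≠ c ∧ b ≠ d ∧ c ≠ d ∧
    Xor' (InArc a b c) (InArc a b d)

/-- A triangulation of the `n`-gon: a set of `n - 3` pairwise non-crossing chords
(each chord having length at least 2). -/
def IsTriangulation (n : ℕ) (T : Finset (Sym2 (ZMod n))) : Prop :=
  T.card = n - 3 ∧ (∀ p ∈ T, 2 ≤ chordLen p) ∧
    ∀ p ∈ T, ∀ q ∈ T, p ≠ q → ¬ Crosses p q

/-- The total chord length of a triangulation. -/
def TCL (n : ℕ) (T : Finset (Sym2 (ZMod n))) : ℕ := ∑ p ∈ T, chordLen p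

/-- A diameter is a chord of length `n / 2` (only possible for `n` even). -/
def IsDiameter {n : ℕ} (p : Sym2 (ZMod n)) : Prop := 2 * chordLen p = n

/-- The chord `p` layers the boundary edge `{i, i + 1}`: the edge lies on the (strictly)
shorter of the two arcs between the endpoints of `p`.  (Diameters never layer an edge.) -/
def LayersEdge {n : ℕ} (p : Sym2 (ZMod n)) (i : ZMod n) : Prop :=
  ∃ a b : ZMod n, p = s(a, b) ∧ (b - a).val < (a - b).val ∧ (i - a).val < (b - a).val

/-- The doubled layer number of the boundary edge `{i, i + 1}`:
twice the number of non-diameter chords layering it, plus the number of diameters. -/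
noncomputable def mT (n : ℕ) (T : Finset (Sym2 (ZMod n))) (i : ZMod n) : ℕ :=
  2 * (T.filter (fun p => LayersEdge p i ∧ ¬ IsDiameter p)).card +
    (T.filter (fun p => IsDiameter p)).card

/-- Subdivision of a triangulation of the `n`-gon at the boundary edge `{n-1, 0}`:
re-embed all chords (via representatives in `{0, …, n-1}`) into the `(n+1)`-gon, whose new
vertex `n` lies between `n - 1` and `0`, and add the chord `{n - 1, 0}`. -/
def subdiv (n : ℕ) (T : Finset (Sym2 (ZMod n))) : Finset (Sym2 (ZMod (n + 1))) :=
  T.image (Sym2.map (fun a : ZMod n => ((a.val : ℕ) : ZMod (n + 1)))) ∪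
    {s(((n - 1 : ℕ) : ZMod (n + 1)), (0 : ZMod (n + 1)))}

/-- Doubling construction: subdivide every boundary edge of the `m`-gon (old vertex `a`
becomes `2a` in the `2m`-gon) and add the chord `{2a, 2a+2}` over each new vertex. -/
def doubleTri (m : ℕ) (T : Finset (Sym2 (ZMod m))) : Finset (Sym2 (ZMod (2 * m))) :=
  T.image (Sym2.map (fun a : ZMod m => ((2 * a.val : ℕ) : ZMod (2 * m)))) ∪
    (Finset.range m).image
      (fun a : ℕ => s(((2 * a : ℕ) : ZMod (2 * m)), ((2 * a + 2 : ℕ) : ZMod (2 * m))))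


lemma val_sub_eq (m : ℕ) [NeZero m] (a b : ZMod m) :
    (b - a).val = if a.val ≤ b.val then b.val - a.val else b.val + m - a.val := by
  have ha := ZMod.val_lt a
  have hb := ZMod.val_lt b
  have h1 : b - a = ((b.val + (m - a.val) : ℕ) : ZMod m) := by
    push_cast [Nat.cast_sub ha.le]
    rw [ZMod.natCast_val, ZMod.natCast_val, ZMod.cast_id, ZMod.cast_id, ZMod.natCast_self]
    ring
  rw [h1, ZMod.val_natCast]
  rcases le_or_gt a.val b.val with h | h
  · rw [if_pos h]
    have h2 : b.val + (m - a.val) = (b.val - a.val) + m := by omega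
    rw [h2, Nat.add_mod_right, Nat.mod_eq_of_lt (by omega)]
  · rw [if_neg (not_le.mpr h), Nat.mod_eq_of_lt (by omega)]
    omega

/-- The embedding of the `n`-gon vertices into the `(n+1)`-gon. -/
def emb (n : ℕ) : ZMod n → ZMod (n + 1) := fun a => ((a.val : ℕ) : ZMod (n + 1))

lemma emb_val (n : ℕ) [NeZero n] (a : ZMod n) : (emb n a).val = a.val :=
  ZMod.val_cast_of_lt (lt_trans (ZMod.val_lt a) (Nat.lt_succ_self n))

lemma emb_inj (n : ℕ) [NeZero n] : Function.Injective (emb n) := by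
  intro a b h
  have := congrArg ZMod.val h
  rw [emb_val, emb_val] at this
  exact ZMod.val_injective _ this

lemma emb_sub_val (n : ℕ) [NeZero n] (a b : ZMod n) :
    (emb n b - emb n a).val = (b - a).val + (if b.val < a.val then 1 else 0) := by
  rw [val_sub_eq, val_sub_eq, emb_val, emb_val]
  have ha := ZMod.val_lt a
  have hb := ZMod.val_lt b
  split_ifs <;> omega

lemma chordLen_mk {n : ℕ} (a b : ZMod n) :
    chordLen s(a, b) = min (b - a).val (a - b).val := rfl

lemma val_eq_iff {n : ℕ} [NeZero n] (a b : ZMod n) : a = b ↔ a.val = b.val :=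
  ⟨fun h => h ▸ rfl, fun h => ZMod.val_injective _ h⟩

lemma inArc_emb (n : ℕ) [NeZero n] (a b x : ZMod n) (hxa : x ≠ a) (hxb : x ≠ b)
    (hab : a ≠ b) : InArc (emb n a) (emb n b) (emb n x) ↔ InArc a b x := by
  have hxa' : x.val ≠ a.val := fun h => hxa (ZMod.val_injective _ h)
  have hxb' : x.val ≠ b.val := fun h => hxb (ZMod.val_injective _ h)
  have hab' : a.val ≠ b.val := fun h => hab (ZMod.val_injective _ h)
  have ha := ZMod.val_lt a; have hb := ZMod.val_lt b; have hx := ZMod.val_lt x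
  unfold InArc
  rw [emb_sub_val, emb_sub_val, val_sub_eq, val_sub_eq]
  split_ifs <;> omega

lemma inArc_emb' (n : ℕ) [NeZero n] (a b x : ZMod n) (hxa : emb n x ≠ emb n a)
    (hxb : emb n x ≠ emb n b) (hab : emb n a ≠ emb n b) :
    InArc (emb n a) (emb n b) (emb n x) ↔ InArc a b x :=
  inArc_emb n a b x (fun h => hxa (h ▸ rfl)) (fun h => hxb (h ▸ rfl)) (fun h => hab (h ▸ rfl))

lemma emb_decomp (n : ℕ) {u v : ZMod n} {a b : ZMod (n + 1)}
    (h : Sym2.map (emb n) s(u, v) = s(a, b)) :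
    ∃ u' v' : ZMod n, s(u', v') = s(u, v) ∧ emb n u' = a ∧ emb n v' = b := by
  rw [Sym2.map_pair_eq] at h
  rcases Sym2.eq_iff.mp h with ⟨h1, h2⟩ | ⟨h1, h2⟩
  · exact ⟨u, v, rfl, h1, h2⟩
  · exact ⟨v, u, Sym2.eq_swap, h2, h1⟩

lemma crosses_of_emb (n : ℕ) [NeZero n] (p q : Sym2 (ZMod n))
    (h : Crosses (Sym2.map (emb n) p) (Sym2.map (emb n) q)) : Crosses p q := by
  obtain ⟨a, b, c, d, hp, hq, hab, hac, had, hbc, hbd, hcd, hx⟩ := h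
  induction p using Sym2.inductionOn with | hf u v =>
  induction q using Sym2.inductionOn with | hf w z =>
  obtain ⟨a', b', hp', rfl, rfl⟩ := emb_decomp n hp
  obtain ⟨c', d', hq', rfl, rfl⟩ := emb_decomp n hq
  refine ⟨a', b', c', d', hp'.symm, hq'.symm, ?_, ?_, ?_, ?_, ?_, ?_, ?_⟩
  · exact fun h => hab (h ▸ rfl)
  · exact fun h => hac (h ▸ rfl)
  · exact fun h => had (h ▸ rfl)
  · exact fun h => hbc (h ▸ rfl)
  · exact fun h => hbd (h ▸ rfl)
  · exact fun h => hcd (h ▸ rfl)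
  · rwa [inArc_emb' n a' b' c' hac.symm hbc.symm hab,
      inArc_emb' n a' b' d' had.symm hbd.symm hab] at hx

lemma val_neg_one' (n : ℕ) [NeZero n] : (-1 : ZMod n).val = n - 1 := by
  have h1 : (1 : ℕ) ≤ n := Nat.one_le_iff_ne_zero.mpr (NeZero.ne n)
  have h2 : (-1 : ZMod n) = ((n - 1 : ℕ) : ZMod n) := by
    push_cast [Nat.cast_sub h1, ZMod.natCast_self]
    ring
  rw [h2, ZMod.val_natCast, Nat.mod_eq_of_lt (by omega)]

lemma wrap_iff (n : ℕ) [NeZero n] (a b : ZMod n) :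
    ((-1 : ZMod n) - a).val < (b - a).val ↔ b.val < a.val := by
  have ha := ZMod.val_lt a; have hb := ZMod.val_lt b
  rw [val_sub_eq, val_sub_eq, val_neg_one']
  split_ifs <;> omega

lemma layersEdge_iff (n : ℕ) [NeZero n] (a b : ZMod n) :
    LayersEdge s(a, b) (-1 : ZMod n) ↔
      ((b - a).val < (a - b).val ∧ b.val < a.val) ∨
      ((a - b).val < (b - a).val ∧ a.val < b.val) := by
  constructor
  · rintro ⟨a', b', hp, h1, h2⟩
    rcases Sym2.eq_iff.mp hp with ⟨rfl, rfl⟩ | ⟨rfl, rfl⟩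
    · exact Or.inl ⟨h1, (wrap_iff n a b).mp h2⟩
    · exact Or.inr ⟨h1, (wrap_iff n b a).mp h2⟩
  · rintro (⟨h1, h2⟩ | ⟨h1, h2⟩)
    · exact ⟨a, b, rfl, h1, (wrap_iff n a b).mpr h2⟩
    · exact ⟨b, a, Sym2.eq_swap.symm, h1, (wrap_iff n b a).mpr h2⟩

lemma sub_val_add (n : ℕ) [NeZero n] (a b : ZMod n) (hab : a ≠ b) :
    (b - a).val + (a - b).val = n := by
  have hab' : a.val ≠ b.val := fun h => hab (ZMod.val_injective _ h)
  have ha := ZMod.val_lt a; have hb := ZMod.val_lt b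
  rw [val_sub_eq, val_sub_eq]
  split_ifs <;> omega

lemma chordLen_map_emb (n : ℕ) [NeZero n] (p : Sym2 (ZMod n)) (hp : 2 ≤ chordLen p) :
    chordLen (Sym2.map (emb n) p) =
      chordLen p + (if LayersEdge p (-1 : ZMod n) then 1 else 0) := by
  induction p using Sym2.inductionOn with | hf a b =>
  have hab : a ≠ b := by
    rintro rfl
    rw [chordLen_mk, sub_self, ZMod.val_zero] at hp
    omega
  have hab' : a.val ≠ b.val := fun h => hab (ZMod.val_injective _ h)
  have hs := sub_val_add n a b hab
  rw [chordLen_mk] at hp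
  rw [Sym2.map_pair_eq, chordLen_mk, chordLen_mk, emb_sub_val, emb_sub_val]
  by_cases hL : LayersEdge s(a, b) (-1 : ZMod n)
  · rw [if_pos hL, layersEdge_iff] at *
    split_ifs <;> omega
  · rw [if_neg hL]
    rw [layersEdge_iff] at hL
    split_ifs <;> omega

lemma layers_not_diam (n : ℕ) [NeZero n] (p : Sym2 (ZMod n)) (h : LayersEdge p (-1 : ZMod n)) :
    ¬ IsDiameter p := by
  obtain ⟨a, b, rfl, h1, _⟩ := h
  have hab : a ≠ b := by rintro rfl; exact absurd rfl (ne_of_lt h1)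
  have hs := sub_val_add n a b hab
  rw [IsDiameter, chordLen_mk]
  omega

lemma diam_eq (n : ℕ) [NeZero n] (a b : ZMod n) (h : IsDiameter s(a, b)) :
    a ≠ b ∧ (b - a).val = (a - b).val := by
  rw [IsDiameter, chordLen_mk] at h
  have hab : a ≠ b := by
    rintro rfl
    rw [sub_self, ZMod.val_zero] at h
    exact absurd h.symm (NeZero.ne n)
  have hs := sub_val_add n a b hab
  exact ⟨hab, by omega⟩

lemma crosses_of_diam (n : ℕ) [NeZero n] (p q : Sym2 (ZMod n))
    (hp : IsDiameter p) (hq : IsDiameter q) (hne : p ≠ q) : Crosses p q := by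
  induction p using Sym2.inductionOn with | hf a b =>
  induction q using Sym2.inductionOn with | hf c d =>
  obtain ⟨hab, hk⟩ := diam_eq n a b hp
  obtain ⟨hcd, hk'⟩ := diam_eq n c d hq
  rw [IsDiameter, chordLen_mk] at hp hq
  have hsab := sub_val_add n a b hab
  have hscd := sub_val_add n c d hcd
  have heq : d - c = b - a := ZMod.val_injective _ (by omega)
  have hkn : 2 * (b - a).val = n := by omega
  have hee : (b - a) + (b - a) = 0 := by
    apply ZMod.val_injective
    rw [ZMod.val_add, ZMod.val_zero]
    have h2 : (b - a).val + (b - a).val = n := by omega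
    simp [h2]
  have hac : a ≠ c := by
    intro h
    exact hne (by rw [Sym2.eq_iff]; exact Or.inl ⟨h, by linear_combination -heq + h⟩)
  have had : a ≠ d := by
    intro h
    subst h
    exact hne (by rw [Sym2.eq_iff]; exact Or.inr ⟨rfl, by linear_combination heq + hee⟩)
  have hbc : b ≠ c := by
    intro h
    subst h
    exact hne (by rw [Sym2.eq_iff]; exact Or.inr ⟨by linear_combination -heq - hee, rfl⟩)
  have hbd : b ≠ d := by
    intro h
    subst h
    exact hne (by rw [Sym2.eq_iff]; exact Or.inl ⟨by linear_combination heq, rfl⟩)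
  have ht0 : (c - a).val ≠ 0 := by
    intro h
    exact hac (sub_eq_zero.mp ((ZMod.val_eq_zero _).mp h)).symm
  have htk : (c - a).val ≠ (b - a).val := by
    intro h
    exact hbc (sub_left_inj.mp (ZMod.val_injective _ h)).symm
  have htn : (c - a).val < n := ZMod.val_lt _
  have hda : d - a = (c - a) + (b - a) := by linear_combination heq
  have hmod : (d - a).val = if (c - a).val < (b - a).val then (c - a).val + (b - a).val
      else (c - a).val - (b - a).val := by
    rw [hda, ZMod.val_add]
    split_ifs with h
    · exact Nat.mod_eq_of_lt (by omega)
    · rw [Nat.mod_eq_sub_mod (by omega), Nat.mod_eq_of_lt (by omega)]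
      omega
  refine ⟨a, b, c, d, rfl, rfl, hab, hac, had, hbc, hbd, hcd, ?_⟩
  unfold Xor' InArc
  by_cases ht : (c - a).val < (b - a).val
  · exact Or.inl ⟨⟨Nat.pos_of_ne_zero ht0, ht⟩,
      fun hcon => by rw [hmod, if_pos ht] at hcon; omega⟩
  · refine Or.inr ⟨⟨?_, ?_⟩, fun hcon => ht hcon.2⟩ <;> rw [hmod, if_neg ht] <;> omega

lemma Nval (n : ℕ) (hn : 4 ≤ n) : (((n - 1 : ℕ) : ZMod (n + 1))).val = n - 1 := by
  rw [ZMod.val_natCast, Nat.mod_eq_of_lt (by omega)]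

lemma mid_iff (n : ℕ) (hn : 4 ≤ n) (u v : ZMod (n + 1))
    (hu1 : 0 < u.val) (hu2 : u.val < n - 1) (hv1 : 0 < v.val) (hv2 : v.val < n - 1) :
    InArc u v (((n - 1 : ℕ) : ZMod (n + 1))) ↔ InArc u v 0 := by
  have huv := ZMod.val_lt u; have hvv := ZMod.val_lt v
  unfold InArc
  rw [val_sub_eq, val_sub_eq (a := u) (b := 0), val_sub_eq (a := u) (b := v),
    Nval n hn, ZMod.val_zero]
  split_ifs <;> omega

lemma arcN0 (n : ℕ) (hn : 4 ≤ n) (w : ZMod (n + 1)) (h1 : 0 < w.val) (h2 : w.val < n - 1) :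
    ¬ InArc (((n - 1 : ℕ) : ZMod (n + 1))) 0 w ∧ InArc 0 (((n - 1 : ℕ) : ZMod (n + 1))) w := by
  have hw := ZMod.val_lt w
  unfold InArc
  rw [sub_zero, sub_zero, val_sub_eq, val_sub_eq, Nval n hn, ZMod.val_zero]
  split_ifs <;> omega

lemma emb_val_bounds (n : ℕ) (hn : 4 ≤ n) [NeZero n] (x : ZMod n)
    (h1 : emb n x ≠ ((n - 1 : ℕ) : ZMod (n + 1))) (h2 : emb n x ≠ 0) :
    0 < (emb n x).val ∧ (emb n x).val < n - 1 := by
  have hv : (emb n x).val = x.val := emb_val n x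
  have hx := ZMod.val_lt x
  constructor
  · exact Nat.pos_of_ne_zero fun h => h2 (ZMod.val_injective _ (by rw [h, ZMod.val_zero]))
  · by_contra h
    exact h1 (ZMod.val_injective _ (by rw [Nval n hn]; omega))

lemma noncross1 (n : ℕ) (hn : 4 ≤ n) [NeZero n] (p : Sym2 (ZMod n)) :
    ¬ Crosses (Sym2.map (emb n) p) s(((n - 1 : ℕ) : ZMod (n + 1)), (0 : ZMod (n + 1))) := by
  induction p using Sym2.inductionOn with | hf u v =>
  rintro ⟨a, b, c, d, hp, hq, hab, hac, had, hbc, hbd, hcd, hx⟩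
  obtain ⟨a₁, b₁, _, rfl, rfl⟩ := emb_decomp n hp
  rcases Sym2.eq_iff.mp hq with ⟨hc, hd⟩ | ⟨hc, hd⟩ <;> subst hc <;> subst hd
  · obtain ⟨ha1, ha2⟩ := emb_val_bounds n hn a₁ hac had
    obtain ⟨hb1, hb2⟩ := emb_val_bounds n hn b₁ hbc hbd
    have hiff := mid_iff n hn (emb n a₁) (emb n b₁) ha1 ha2 hb1 hb2
    rcases hx with ⟨h1, h2⟩ | ⟨h1, h2⟩
    · exact h2 (hiff.mp h1)
    · exact h2 (hiff.mpr h1)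
  · obtain ⟨ha1, ha2⟩ := emb_val_bounds n hn a₁ had hac
    obtain ⟨hb1, hb2⟩ := emb_val_bounds n hn b₁ hbd hbc
    have hiff := mid_iff n hn (emb n a₁) (emb n b₁) ha1 ha2 hb1 hb2
    rcases hx with ⟨h1, h2⟩ | ⟨h1, h2⟩
    · exact h2 (hiff.mpr h1)
    · exact h2 (hiff.mp h1)

lemma noncross2 (n : ℕ) (hn : 4 ≤ n) [NeZero n] (p : Sym2 (ZMod n)) :
    ¬ Crosses s(((n - 1 : ℕ) : ZMod (n + 1)), (0 : ZMod (n + 1))) (Sym2.map (emb n) p) := by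
  induction p using Sym2.inductionOn with | hf u v =>
  rintro ⟨a, b, c, d, hp, hq, hab, hac, had, hbc, hbd, hcd, hx⟩
  obtain ⟨c₁, d₁, _, rfl, rfl⟩ := emb_decomp n hq
  rcases Sym2.eq_iff.mp hp with ⟨ha, hb⟩ | ⟨ha, hb⟩ <;> subst ha <;> subst hb
  · obtain ⟨hc1, hc2⟩ := emb_val_bounds n hn c₁ (Ne.symm hac) (Ne.symm hbc)
    obtain ⟨hd1, hd2⟩ := emb_val_bounds n hn d₁ (Ne.symm had) (Ne.symm hbd)
    rcases hx with ⟨h1, _⟩ | ⟨h1, _⟩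
    · exact (arcN0 n hn _ hc1 hc2).1 h1
    · exact (arcN0 n hn _ hd1 hd2).1 h1
  · obtain ⟨hc1, hc2⟩ := emb_val_bounds n hn c₁ (Ne.symm hbc) (Ne.symm hac)
    obtain ⟨hd1, hd2⟩ := emb_val_bounds n hn d₁ (Ne.symm hbd) (Ne.symm had)
    rcases hx with ⟨_, h2⟩ | ⟨_, h2⟩
    · exact h2 (arcN0 n hn _ hd1 hd2).2
    · exact h2 (arcN0 n hn _ hc1 hc2).2

lemma chordLen_new (n : ℕ) (hn : 4 ≤ n) :
    chordLen s(((n - 1 : ℕ) : ZMod (n + 1)), (0 : ZMod (n + 1))) = 2 := by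
  rw [chordLen_mk]
  rw [val_sub_eq, val_sub_eq, Nval n hn, ZMod.val_zero]
  split_ifs <;> omega

/-- For `n ≥ 4` and a triangulation `T` of the `n`-gon, the subdivision
`T⁺ = T ∪ {{n-1, 0}}` at the boundary edge `e = {n-1, 0}` is a triangulation of the
`(n+1)`-gon and `2·TCL(T⁺) = 2·TCL(T) + 4 + m_T(e)` if `T` has no diameter, while
`2·TCL(T⁺) = 2·TCL(T) + 3 + m_T(e)` if `T` has a diameter. -/
theorem subdiv_TCL (n : ℕ) (hn : 4 ≤ n) (T : Finset (Sym2 (ZMod n)))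
    (hT : IsTriangulation n T) :
    IsTriangulation (n + 1) (subdiv n T) ∧
    ((∀ p ∈ T, ¬ IsDiameter p) →
      2 * TCL (n + 1) (subdiv n T) = 2 * TCL n T + 4 + mT n T (-1 : ZMod n)) ∧
    ((∃ p ∈ T, IsDiameter p) →
      2 * TCL (n + 1) (subdiv n T) = 2 * TCL n T + 3 + mT n T (-1 : ZMod n)) := by
  haveI : NeZero n := ⟨by omega⟩
  obtain ⟨hcard, hlen, hcross⟩ := hT
  have hsub : subdiv n T = T.image (Sym2.map (emb n)) ∪
      {s(((n - 1 : ℕ) : ZMod (n + 1)), (0 : ZMod (n + 1)))} := rfl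
  have hinj : Function.Injective (Sym2.map (emb n)) := Sym2.map.injective (emb_inj n)
  have hnotmem : s(((n - 1 : ℕ) : ZMod (n + 1)), (0 : ZMod (n + 1))) ∉
      T.image (Sym2.map (emb n)) := by
    intro h
    obtain ⟨p, hpT, hmap⟩ := Finset.mem_image.mp h
    induction p using Sym2.inductionOn with | hf u v =>
    obtain ⟨u', v', hs, hu, hv⟩ := emb_decomp n hmap
    have h1 : u'.val = n - 1 := by
      have := congrArg ZMod.val hu
      rwa [emb_val, Nval n hn] at this
    have h2 : v'.val = 0 := by
      have := congrArg ZMod.val hv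
      rwa [emb_val, ZMod.val_zero] at this
    have hlp := hlen _ hpT
    rw [← hs, chordLen_mk, val_sub_eq, val_sub_eq] at hlp
    split_ifs at hlp <;> omega
  have hdisj : Disjoint (T.image (Sym2.map (emb n)))
      {s(((n - 1 : ℕ) : ZMod (n + 1)), (0 : ZMod (n + 1)))} :=
    Finset.disjoint_singleton_right.mpr hnotmem
  have htri : IsTriangulation (n + 1) (subdiv n T) := by
    refine ⟨?_, ?_, ?_⟩
    · rw [hsub, Finset.card_union_of_disjoint hdisj, Finset.card_image_of_injective _ hinj,
        Finset.card_singleton, hcard]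
      omega
    · intro p hp
      rw [hsub, Finset.mem_union, Finset.mem_singleton] at hp
      rcases hp with hp | hp
      · obtain ⟨q, hqT, rfl⟩ := Finset.mem_image.mp hp
        rw [chordLen_map_emb n q (hlen q hqT)]
        have := hlen q hqT
        split_ifs <;> omega
      · rw [hp, chordLen_new n hn]
    · intro p hp q hq hne
      rw [hsub, Finset.mem_union, Finset.mem_singleton] at hp hq
      rcases hp with hp | hp <;> rcases hq with hq | hq
      · obtain ⟨p₀, hp₀, rfl⟩ := Finset.mem_image.mp hp
        obtain ⟨q₀, hq₀, rfl⟩ := Finset.mem_image.mp hq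
        intro hc
        exact hcross p₀ hp₀ q₀ hq₀ (fun h => hne (by rw [h])) (crosses_of_emb n _ _ hc)
      · obtain ⟨p₀, hp₀, rfl⟩ := Finset.mem_image.mp hp
        rw [hq]
        exact noncross1 n hn p₀
      · obtain ⟨q₀, hq₀, rfl⟩ := Finset.mem_image.mp hq
        rw [hp]
        exact noncross2 n hn q₀
      · exact absurd (hp.trans hq.symm) hne
  have hLfilter : T.filter (fun p => LayersEdge p (-1 : ZMod n) ∧ ¬ IsDiameter p)
      = T.filter (fun p => LayersEdge p (-1 : ZMod n)) :=
    Finset.filter_congr (fun p _ => ⟨fun h => h.1, fun h => ⟨h, layers_not_diam n p h⟩⟩)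
  have hsum : TCL (n + 1) (subdiv n T) =
      TCL n T + (T.filter (fun p => LayersEdge p (-1 : ZMod n))).card + 2 := by
    simp only [TCL]
    rw [hsub, Finset.sum_union hdisj, Finset.sum_singleton, chordLen_new n hn,
      Finset.sum_image (fun x _ y _ h => hinj h),
      Finset.sum_congr rfl (fun p hp => chordLen_map_emb n p (hlen p hp)),
      Finset.sum_add_distrib, Finset.card_filter]
  refine ⟨htri, ?_, ?_⟩
  · intro hnd
    have hD : T.filter (fun p => IsDiameter p) = ∅ :=
      Finset.filter_eq_empty_iff.mpr (fun p hp => hnd p hp)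
    rw [mT, hLfilter, hD, Finset.card_empty, hsum]
    omega
  · rintro ⟨p₀, hp₀T, hp₀⟩
    have hD : T.filter (fun p => IsDiameter p) = {p₀} := by
      apply Finset.eq_singleton_iff_unique_mem.mpr
      refine ⟨Finset.mem_filter.mpr ⟨hp₀T, hp₀⟩, ?_⟩
      intro q hq
      rw [Finset.mem_filter] at hq
      by_contra hne
      exact hcross q hq.1 p₀ hp₀T hne (crosses_of_diam n q p₀ hq.2 hp₀ hne)
    rw [mT, hLfilter, hD, Finset.card_singleton, hsum]
    omega
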